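/- Let u₀ : ℝ³ → ℝ³ be measurable with finite weak-L³ quasinorm ‖u₀‖_{L^{3,∞}} := sup_{σ>0} σ · |{x ∈ ℝ³ : |u₀(x)| > σ}|^{1/3} < ∞. Then for every q > 3, ∑_{k∈ℤ³} (∫_{B₁(k)} |u₀(x)|² dx)^{q/2} < ∞; that is, u₀ ∈ E²_q for every q > 3. -/

import Mathlib

open MeasureTheory Filter Metric Set
open scoped ENNReal NNReal Topology Real BigOperators

noncomputable section

abbrev E3 : Type := EuclideanSpace ℝ (Fin 3)

/-- A lattice point of `ℤ³` viewed as a point of `ℝ³`. -/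
def zc (k : Fin 3 → ℤ) : E3 := WithLp.toLp 2 (fun i => (k i : ℝ))

/-- The `E²_q` (Wiener amalgam) norm. -/
def e2qNorm (q : ℝ) (f : E3 → E3) : ℝ≥0∞ :=
  (∑' k : Fin 3 → ℤ, (∫⁻ x in ball (zc k) 1, (‖f x‖₊ : ℝ≥0∞) ^ 2) ^ (q/2)) ^ (1/q)

/-- `A_{0,q}(R) = ‖(∫_{B_R(Rk)} |u₀|²)_k‖_{ℓ^{q/2}}`. -/
def A0q (q R : ℝ) (u₀ : E3 → E3) : ℝ≥0∞ :=
  (∑' k : Fin 3 → ℤ, (∫⁻ x in ball (R • zc k) R, (‖u₀ x‖₊ : ℝ≥0∞) ^ 2) ^ (q/2)) ^ (2/q)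

/-- `N⁰_R(u₀) = sup_{x₀} R⁻¹ ∫_{B_R(x₀)} |u₀|²`. -/
def N0R (u₀ : E3 → E3) (R : ℝ) : ℝ≥0∞ :=
  ⨆ x₀ : E3, (ENNReal.ofReal R)⁻¹ * ∫⁻ x in ball x₀ R, (‖u₀ x‖₊ : ℝ≥0∞) ^ 2

/-- `N⁰_{q,R}(u₀) = R⁻¹ A_{0,q}(R)`. -/
def N0q (q R : ℝ) (u₀ : E3 → E3) : ℝ≥0∞ := (ENNReal.ofReal R)⁻¹ * A0q q R u₀

/-- The weak-`L³` (Lorentz `L^{3,∞}`) quasinorm `sup_{σ>0} σ |{|f|>σ}|^{1/3}`. -/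
def wL3 (f : E3 → E3) : ℝ≥0∞ :=
  ⨆ σ : ℝ≥0, (σ : ℝ≥0∞) * (volume {x : E3 | (σ : ℝ) < ‖f x‖}) ^ ((1:ℝ)/3)

/-! ### Auxiliary lemmas -/

/-- Elementary: `(x+y)^p ≤ 2^p (x^p + y^p)` in `ℝ≥0∞`. -/
lemma aux_add_rpow_le (x y : ℝ≥0∞) {p : ℝ} (hp : 0 ≤ p) :
    (x + y) ^ p ≤ 2 ^ p * (x ^ p + y ^ p) := by
  have h1 : x + y ≤ 2 * (x ⊔ y) := by
    rcases le_total x y with h | h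
    · calc x + y ≤ y + y := by gcongr
        _ = 2 * y := (two_mul y).symm
        _ ≤ 2 * (x ⊔ y) := by gcongr; exact le_max_right _ _
    · calc x + y ≤ x + x := by gcongr
        _ = 2 * x := (two_mul x).symm
        _ ≤ 2 * (x ⊔ y) := by gcongr; exact le_max_left _ _
  calc (x + y) ^ p ≤ (2 * (x ⊔ y)) ^ p := ENNReal.rpow_le_rpow h1 hp
    _ = 2 ^ p * (x ⊔ y) ^ p := ENNReal.mul_rpow_of_nonneg _ _ hp
    _ ≤ 2 ^ p * (x ^ p + y ^ p) := by
        gcongr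
        rcases le_total x y with h | h
        · rw [sup_eq_right.mpr h]; exact le_add_self
        · rw [sup_eq_left.mpr h]; exact le_self_add

/-- Elementary: if `x ≤ M < ∞` and `1 ≤ p` then `x^p ≤ M^(p-1) * x`. -/
lemma aux_rpow_le_mul {x M : ℝ≥0∞} (hx : x ≤ M) (hM : M ≠ ⊤) {p : ℝ} (hp : 1 ≤ p) :
    x ^ p ≤ M ^ (p - 1) * x := by
  by_cases hx0 : x = 0
  · subst hx0
    rw [ENNReal.zero_rpow_of_pos (by linarith)]
    simp
  · have hxt : x ≠ ⊤ := fun h => hM (top_le_iff.mp (h ▸ hx))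
    calc x ^ p = x ^ (p - 1 + 1) := by rw [sub_add_cancel]
      _ = x ^ (p - 1) * x ^ (1:ℝ) := ENNReal.rpow_add _ _ hx0 hxt
      _ = x ^ (p - 1) * x := by rw [ENNReal.rpow_one]
      _ ≤ M ^ (p - 1) * x :=
          mul_le_mul_left (ENNReal.rpow_le_rpow hx (by linarith)) x

/-- The bounded-overlap estimate: summing integrals over the unit balls centered at
lattice points costs at most a factor `8`. -/
lemma aux_overlap (h : E3 → ℝ≥0∞) (hm : Measurable h) :
    ∑' k : Fin 3 → ℤ, ∫⁻ x in ball (zc k) 1, h x ≤ 8 * ∫⁻ x, h x := by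
  have key : ∀ x : E3, ∑' k : Fin 3 → ℤ, (ball (zc k) 1).indicator h x ≤ 8 * h x := by
    intro x
    set F : Finset (Fin 3 → ℤ) :=
      Fintype.piFinset fun i => ({⌊x i⌋, ⌊x i⌋ + 1} : Finset ℤ) with hF
    have hsub : ∀ k : Fin 3 → ℤ,
        (ball (zc k) 1).indicator h x ≤ (↑F : Set (Fin 3 → ℤ)).indicator (fun _ => h x) k := by
      intro k
      by_cases hx : x ∈ ball (zc k) 1
      · have hk : k ∈ F := by
          rw [hF, Fintype.mem_piFinset]
          intro i
          have hdist : dist x (zc k) < 1 := mem_ball.mp hx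
          have hcoord : |x i - (k i : ℝ)| < 1 := by
            have h1 : |x i - (k i : ℝ)| ≤ dist x (zc k) := by
              rw [EuclideanSpace.dist_eq]
              have h2 : dist (x i) (zc k i) ^ 2 ≤ ∑ j, dist (x j) (zc k j) ^ 2 :=
                Finset.single_le_sum (f := fun j => dist (x j) (zc k j) ^ 2)
                  (fun j _ => sq_nonneg _) (Finset.mem_univ i)
              calc |x i - (k i : ℝ)| = Real.sqrt ((dist (x i) (zc k i)) ^ 2) := by
                    rw [Real.sqrt_sq_eq_abs]
                    simp [zc, Real.dist_eq]
                _ ≤ _ := Real.sqrt_le_sqrt h2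
            linarith
          rw [abs_lt] at hcoord
          have h2 : ⌊x i⌋ ≤ k i := by
            have h3 : x i < ((k i + 1 : ℤ) : ℝ) := by push_cast; linarith [hcoord.1]
            have := Int.floor_lt.mpr h3
            omega
          have h3 : k i ≤ ⌊x i⌋ + 1 := by
            have h4 : ((k i - 1 : ℤ) : ℝ) ≤ x i := by push_cast; linarith [hcoord.2]
            have := Int.le_floor.mpr h4
            omega
          simp only [Finset.mem_insert, Finset.mem_singleton]
          omega
        rw [Set.indicator_of_mem hx, Set.indicator_of_mem (by exact_mod_cast hk)]
      · rw [Set.indicator_of_notMem hx]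
        exact zero_le
    have hcard : (F.card : ℝ≥0∞) ≤ 8 := by
      have h1 : F.card ≤ 8 := by
        rw [hF, Fintype.card_piFinset]
        calc ∏ i : Fin 3, ({⌊x i⌋, ⌊x i⌋ + 1} : Finset ℤ).card
            ≤ ∏ _i : Fin 3, 2 := by
              apply Finset.prod_le_prod (fun _ _ => Nat.zero_le _)
              intro i _
              exact (Finset.card_insert_le _ _).trans (by simp)
          _ = 8 := by simp
      exact_mod_cast h1
    calc ∑' k, (ball (zc k) 1).indicator h x
        ≤ ∑' k : Fin 3 → ℤ, (↑F : Set (Fin 3 → ℤ)).indicator (fun _ => h x) k :=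
          ENNReal.tsum_le_tsum hsub
      _ = ∑ _k ∈ F, h x := (sum_eq_tsum_indicator _ _).symm
      _ = (F.card : ℝ≥0∞) * h x := by rw [Finset.sum_const, nsmul_eq_mul]
      _ ≤ 8 * h x := by gcongr
  calc ∑' k : Fin 3 → ℤ, ∫⁻ x in ball (zc k) 1, h x
      = ∑' k : Fin 3 → ℤ, ∫⁻ x, (ball (zc k) 1).indicator h x := by
        refine tsum_congr fun k => ?_
        rw [lintegral_indicator measurableSet_ball]
    _ = ∫⁻ x, ∑' k : Fin 3 → ℤ, (ball (zc k) 1).indicator h x :=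
        (lintegral_tsum fun k => (hm.indicator measurableSet_ball).aemeasurable).symm
    _ ≤ ∫⁻ x, 8 * h x := lintegral_mono key
    _ = 8 * ∫⁻ x, h x := lintegral_const_mul 8 hm

/-- Distribution-function bound coming from finiteness of the weak-`L³` norm. -/
lemma aux_dist (u₀ : E3 → E3) {σ : ℝ≥0} (hσ : 0 < σ) :
    volume {x : E3 | (σ : ℝ) < ‖u₀ x‖} ≤ ((σ : ℝ≥0∞)⁻¹ * wL3 u₀) ^ (3 : ℕ) := by
  set C := wL3 u₀ with hC
  set m := volume {x : E3 | (σ : ℝ) < ‖u₀ x‖} with hm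
  have h1 : (σ : ℝ≥0∞) * m ^ ((1:ℝ)/3) ≤ C :=
    le_iSup (fun σ : ℝ≥0 => (σ : ℝ≥0∞) * (volume {x : E3 | (σ : ℝ) < ‖u₀ x‖}) ^ ((1:ℝ)/3)) σ
  have hσ0 : (σ : ℝ≥0∞) ≠ 0 := by exact_mod_cast hσ.ne'
  have hσt : (σ : ℝ≥0∞) ≠ ⊤ := ENNReal.coe_ne_top
  have h2 : m ^ ((1:ℝ)/3) ≤ (σ : ℝ≥0∞)⁻¹ * C := by
    calc m ^ ((1:ℝ)/3) = (σ : ℝ≥0∞)⁻¹ * ((σ : ℝ≥0∞) * m ^ ((1:ℝ)/3)) := by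
          rw [← mul_assoc, ENNReal.inv_mul_cancel hσ0 hσt, one_mul]
      _ ≤ (σ : ℝ≥0∞)⁻¹ * C := mul_le_mul_right h1 _
  have h3 : m = (m ^ ((1:ℝ)/3)) ^ ((3:ℕ) : ℝ) := by
    rw [← ENNReal.rpow_mul]
    norm_num
  calc m = (m ^ ((1:ℝ)/3)) ^ ((3:ℕ) : ℝ) := h3
    _ ≤ ((σ : ℝ≥0∞)⁻¹ * C) ^ ((3:ℕ) : ℝ) := ENNReal.rpow_le_rpow h2 (by norm_num)
    _ = ((σ : ℝ≥0∞)⁻¹ * C) ^ (3 : ℕ) := ENNReal.rpow_natCast _ 3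

/-- Finiteness of the integral of `|u₀|²` over the region where `|u₀| > 1`. -/
lemma aux_tail (u₀ : E3 → E3) (hmeas : Measurable u₀) (hfin : wL3 u₀ < ⊤) :
    ∫⁻ x in {x : E3 | 1 < ‖u₀ x‖}, (‖u₀ x‖₊ : ℝ≥0∞) ^ 2 < ⊤ := by
  set C := wL3 u₀ with hC
  set A : ℕ → Set E3 := fun j => {x : E3 | (2:ℝ)^j < ‖u₀ x‖ ∧ ‖u₀ x‖ ≤ 2^(j+1)} with hA
  have hAm : ∀ j, MeasurableSet (A j) := fun j =>
    (measurableSet_lt measurable_const hmeas.norm).inter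
      (measurableSet_le hmeas.norm measurable_const)
  have hcover : {x : E3 | 1 < ‖u₀ x‖} ⊆ ⋃ j : ℕ, A j := by
    intro x hx
    simp only [mem_setOf_eq] at hx
    have hex : ∃ n : ℕ, ‖u₀ x‖ ≤ 2 ^ (n + 1) := by
      obtain ⟨n, hn⟩ := pow_unbounded_of_one_lt (‖u₀ x‖) (by norm_num : (1:ℝ) < 2)
      exact ⟨n, hn.le.trans (pow_le_pow_right₀ (by norm_num) (Nat.le_succ n))⟩
    set n₀ := Nat.find hex with hn₀
    have h1 : ‖u₀ x‖ ≤ 2 ^ (n₀ + 1) := Nat.find_spec hex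
    have h2 : (2:ℝ) ^ n₀ < ‖u₀ x‖ := by
      rcases Nat.eq_zero_or_pos n₀ with h | h
      · rw [h]; simpa using hx
      · have h3 : ¬ (‖u₀ x‖ ≤ 2 ^ ((n₀ - 1) + 1)) := Nat.find_min hex (by omega)
        push_neg at h3
        have : n₀ - 1 + 1 = n₀ := by omega
        rwa [this] at h3
    exact mem_iUnion.mpr ⟨n₀, h2, h1⟩
  have hterm : ∀ j : ℕ, ∫⁻ x in A j, (‖u₀ x‖₊ : ℝ≥0∞) ^ 2 ≤ 4 * C ^ 3 * (2⁻¹ : ℝ≥0∞) ^ j := by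
    intro j
    have hb : ∫⁻ x in A j, (‖u₀ x‖₊ : ℝ≥0∞) ^ 2
        ≤ ∫⁻ _x in A j, ((2:ℝ≥0∞)^(j+1)) ^ 2 := by
      apply setLIntegral_mono' (hAm j)
      intro x hx
      have h1 : ‖u₀ x‖₊ ≤ (2:ℝ≥0)^(j+1) := by
        have := hx.2
        rw [← NNReal.coe_le_coe]
        push_cast
        simpa [coe_nnnorm] using this
      have h2 : (‖u₀ x‖₊ : ℝ≥0∞) ≤ (2:ℝ≥0∞)^(j+1) := by
        have := ENNReal.coe_le_coe.mpr h1
        simpa [ENNReal.coe_pow] using this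
      gcongr
    have hvol : volume (A j) ≤ (((2:ℝ≥0∞)^j)⁻¹ * C) ^ (3:ℕ) := by
      have hsub : A j ⊆ {x : E3 | (((2:ℝ≥0)^j : ℝ≥0) : ℝ) < ‖u₀ x‖} := by
        intro x hx
        have := hx.1
        simp only [mem_setOf_eq]
        push_cast
        exact this
      calc volume (A j) ≤ volume {x : E3 | (((2:ℝ≥0)^j : ℝ≥0) : ℝ) < ‖u₀ x‖} :=
            measure_mono hsub
        _ ≤ ((((2:ℝ≥0)^j : ℝ≥0) : ℝ≥0∞)⁻¹ * C) ^ (3:ℕ) := aux_dist u₀ (by positivity)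
        _ = (((2:ℝ≥0∞)^j)⁻¹ * C) ^ (3:ℕ) := by push_cast; ring_nf
    have harith : ((2:ℝ≥0∞)^(j+1)) ^ 2 * ((((2:ℝ≥0∞)^j)⁻¹ * C) ^ (3:ℕ))
        = 4 * C ^ 3 * (2⁻¹ : ℝ≥0∞) ^ j := by
      have h48 : (4:ℝ≥0∞) * 8⁻¹ = 2⁻¹ := by
        have h8 : (8:ℝ≥0∞) = 2 * 4 := by norm_num
        rw [h8, ENNReal.mul_inv (by norm_num) (by norm_num)]
        rw [← mul_assoc, mul_comm (4:ℝ≥0∞) (2:ℝ≥0∞)⁻¹, mul_assoc,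
          ENNReal.mul_inv_cancel (by norm_num) (by norm_num), mul_one]
      have e2 : ((2:ℝ≥0∞)^(j+1))^2 = (4:ℝ≥0∞)^(j+1) := by
        rw [← pow_mul, mul_comm, pow_mul]; norm_num
      have e3 : (((2:ℝ≥0∞)^j)⁻¹)^3 = (8⁻¹ : ℝ≥0∞)^j := by
        rw [ENNReal.inv_pow, ← pow_mul, mul_comm, pow_mul, ← ENNReal.inv_pow]
        norm_num
      calc ((2:ℝ≥0∞)^(j+1)) ^ 2 * ((((2:ℝ≥0∞)^j)⁻¹ * C) ^ (3:ℕ))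
          = (4:ℝ≥0∞)^(j+1) * ((8⁻¹ : ℝ≥0∞)^j * C^3) := by
            rw [mul_pow, e2, e3]
        _ = 4 * (((4:ℝ≥0∞)^j * (8⁻¹ : ℝ≥0∞)^j) * C^3) := by rw [pow_succ]; ring
        _ = 4 * ((2⁻¹ : ℝ≥0∞)^j * C^3) := by rw [← mul_pow, h48]
        _ = 4 * C ^ 3 * (2⁻¹ : ℝ≥0∞) ^ j := by ring
    calc ∫⁻ x in A j, (‖u₀ x‖₊ : ℝ≥0∞) ^ 2
        ≤ ∫⁻ _x in A j, ((2:ℝ≥0∞)^(j+1)) ^ 2 := hb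
      _ = ((2:ℝ≥0∞)^(j+1)) ^ 2 * volume (A j) := setLIntegral_const _ _
      _ ≤ ((2:ℝ≥0∞)^(j+1)) ^ 2 * ((((2:ℝ≥0∞)^j)⁻¹ * C) ^ (3:ℕ)) := by gcongr
      _ = 4 * C ^ 3 * (2⁻¹ : ℝ≥0∞) ^ j := harith
  calc ∫⁻ x in {x : E3 | 1 < ‖u₀ x‖}, (‖u₀ x‖₊ : ℝ≥0∞) ^ 2
      ≤ ∫⁻ x in ⋃ j : ℕ, A j, (‖u₀ x‖₊ : ℝ≥0∞) ^ 2 := lintegral_mono_set hcover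
    _ ≤ ∑' j : ℕ, ∫⁻ x in A j, (‖u₀ x‖₊ : ℝ≥0∞) ^ 2 := lintegral_iUnion_le _ _
    _ ≤ ∑' j : ℕ, 4 * C ^ 3 * (2⁻¹ : ℝ≥0∞) ^ j := ENNReal.tsum_le_tsum hterm
    _ = 4 * C ^ 3 * ∑' j : ℕ, (2⁻¹ : ℝ≥0∞) ^ j := ENNReal.tsum_mul_left
    _ = 4 * C ^ 3 * (1 - 2⁻¹)⁻¹ := by rw [ENNReal.tsum_geometric]
    _ < ⊤ := by
        apply ENNReal.mul_lt_top
        · exact ENNReal.mul_lt_top (by norm_num) (ENNReal.pow_lt_top hfin)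
        · refine ENNReal.inv_lt_top.mpr (tsub_pos_iff_not_le.mpr (not_le.mpr ?_))
          exact ENNReal.inv_lt_one.mpr (by norm_num)

/-- Finiteness of the integral of `|u₀|^q` over the region where `|u₀| ≤ 1`. -/
lemma aux_small (u₀ : E3 → E3) (hmeas : Measurable u₀) (hfin : wL3 u₀ < ⊤)
    {q : ℝ} (hq : 3 < q) :
    ∫⁻ x in {x : E3 | ‖u₀ x‖ ≤ 1}, (‖u₀ x‖₊ : ℝ≥0∞) ^ q < ⊤ := by
  have hq0 : (0:ℝ) < q := by linarith
  set C := wL3 u₀ with hC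
  set B : ℕ → Set E3 := fun j =>
    {x : E3 | (2:ℝ)⁻¹^(j+1) < ‖u₀ x‖ ∧ ‖u₀ x‖ ≤ 2⁻¹^j} with hB
  have hBm : ∀ j, MeasurableSet (B j) := fun j =>
    (measurableSet_lt measurable_const hmeas.norm).inter
      (measurableSet_le hmeas.norm measurable_const)
  set Z : Set E3 := {x : E3 | ‖u₀ x‖ = 0} with hZ
  have hZm : MeasurableSet Z := hmeas.norm (measurableSet_singleton 0)
  have hcover : {x : E3 | ‖u₀ x‖ ≤ 1} ⊆ Z ∪ ⋃ j : ℕ, B j := by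
    intro x hx
    simp only [mem_setOf_eq] at hx
    by_cases h0 : ‖u₀ x‖ = 0
    · exact Or.inl h0
    · have hpos : 0 < ‖u₀ x‖ := lt_of_le_of_ne (norm_nonneg _) (Ne.symm h0)
      have hex : ∃ n : ℕ, (2:ℝ)⁻¹ ^ (n + 1) < ‖u₀ x‖ := by
        obtain ⟨n, hn⟩ := exists_pow_lt_of_lt_one hpos (by norm_num : (2:ℝ)⁻¹ < 1)
        exact ⟨n, lt_of_le_of_lt
          (pow_le_pow_of_le_one (by norm_num) (by norm_num) (Nat.le_succ n)) hn⟩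
      set n₀ := Nat.find hex with hn₀
      have h1 : (2:ℝ)⁻¹ ^ (n₀ + 1) < ‖u₀ x‖ := Nat.find_spec hex
      have h2 : ‖u₀ x‖ ≤ (2:ℝ)⁻¹ ^ n₀ := by
        rcases Nat.eq_zero_or_pos n₀ with h | h
        · rw [h]; simpa using hx
        · have h3 : ¬ ((2:ℝ)⁻¹ ^ ((n₀ - 1) + 1) < ‖u₀ x‖) := Nat.find_min hex (by omega)
          push_neg at h3
          have he : n₀ - 1 + 1 = n₀ := by omega
          rwa [he] at h3
      exact Or.inr (mem_iUnion.mpr ⟨n₀, h1, h2⟩)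
  have hzero : ∫⁻ x in Z, (‖u₀ x‖₊ : ℝ≥0∞) ^ q = 0 := by
    rw [setLIntegral_congr_fun hZm (fun x hx => ?_), lintegral_zero]
    have hx0 : u₀ x = 0 := by simpa [hZ] using hx
    simp only [hx0, nnnorm_zero, ENNReal.coe_zero]
    exact ENNReal.zero_rpow_of_pos hq0
  have hrne : (2:ℝ≥0∞) ^ ((3:ℝ) - q) < 1 :=
    ENNReal.rpow_lt_one_of_one_lt_of_neg (by norm_num) (by linarith)
  have hterm : ∀ j : ℕ, ∫⁻ x in B j, (‖u₀ x‖₊ : ℝ≥0∞) ^ q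
      ≤ 8 * C ^ 3 * ((2:ℝ≥0∞) ^ ((3:ℝ) - q)) ^ j := by
    intro j
    have hcast : (((2:ℝ≥0)⁻¹ ^ j : ℝ≥0) : ℝ≥0∞) = (2:ℝ≥0∞)⁻¹ ^ j := by
      rw [ENNReal.coe_pow, ENNReal.coe_inv (by norm_num)]
      norm_num
    have hb : ∫⁻ x in B j, (‖u₀ x‖₊ : ℝ≥0∞) ^ q
        ≤ ∫⁻ _x in B j, (((2:ℝ≥0∞)⁻¹ ^ j) ^ q) := by
      apply setLIntegral_mono' (hBm j)
      intro x hx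
      have h1 : ‖u₀ x‖₊ ≤ (2:ℝ≥0)⁻¹ ^ j := by
        have hx2 := hx.2
        rw [← NNReal.coe_le_coe]
        push_cast
        simpa [coe_nnnorm] using hx2
      have h2 : (‖u₀ x‖₊ : ℝ≥0∞) ≤ (2:ℝ≥0∞)⁻¹ ^ j :=
        hcast ▸ ENNReal.coe_le_coe.mpr h1
      exact ENNReal.rpow_le_rpow h2 hq0.le
    have hvol : volume (B j) ≤ ((2:ℝ≥0∞) ^ (j+1) * C) ^ (3:ℕ) := by
      have hsub : B j ⊆ {x : E3 | (((2:ℝ≥0)⁻¹^(j+1) : ℝ≥0) : ℝ) < ‖u₀ x‖} := by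
        intro x hx
        have hx1 := hx.1
        simp only [mem_setOf_eq]
        push_cast
        exact hx1
      have hcast2 : (((2:ℝ≥0)⁻¹ ^ (j+1) : ℝ≥0) : ℝ≥0∞)⁻¹ = (2:ℝ≥0∞) ^ (j+1) := by
        rw [ENNReal.coe_pow, ENNReal.coe_inv (by norm_num), ← ENNReal.inv_pow, inv_inv]
        norm_num
      calc volume (B j) ≤ volume {x : E3 | (((2:ℝ≥0)⁻¹^(j+1) : ℝ≥0) : ℝ) < ‖u₀ x‖} :=
            measure_mono hsub
        _ ≤ ((((2:ℝ≥0)⁻¹^(j+1) : ℝ≥0) : ℝ≥0∞)⁻¹ * C) ^ (3:ℕ) := aux_dist u₀ (by positivity)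
        _ = ((2:ℝ≥0∞) ^ (j+1) * C) ^ (3:ℕ) := by rw [hcast2]
    have e1 : ((2:ℝ≥0∞)⁻¹ ^ j) ^ q = (2:ℝ≥0∞) ^ (-(j:ℝ) * q) := by
      rw [← ENNReal.inv_pow, ← ENNReal.rpow_natCast (2:ℝ≥0∞) j, ← ENNReal.rpow_neg,
        ← ENNReal.rpow_mul]
    have e2 : ((2:ℝ≥0∞)^(j+1))^(3:ℕ) = (2:ℝ≥0∞) ^ ((3:ℝ)*((j:ℝ)+1)) := by
      rw [← pow_mul, ← ENNReal.rpow_natCast (2:ℝ≥0∞) ((j+1)*3)]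
      congr 1
      push_cast
      ring
    have e3 : ((2:ℝ≥0∞) ^ ((3:ℝ)-q))^j = (2:ℝ≥0∞) ^ (((3:ℝ)-q)*(j:ℝ)) := by
      rw [← ENNReal.rpow_natCast ((2:ℝ≥0∞) ^ ((3:ℝ)-q)) j, ← ENNReal.rpow_mul]
    have e4 : (8:ℝ≥0∞) = (2:ℝ≥0∞) ^ (3:ℝ) := by
      rw [show (3:ℝ) = ((3:ℕ):ℝ) by norm_num, ENNReal.rpow_natCast]
      norm_num
    have harith : ((2:ℝ≥0∞)⁻¹ ^ j) ^ q * ((2:ℝ≥0∞) ^ (j+1) * C) ^ (3:ℕ)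
        = 8 * C ^ 3 * ((2:ℝ≥0∞) ^ ((3:ℝ) - q)) ^ j := by
      calc ((2:ℝ≥0∞)⁻¹ ^ j) ^ q * ((2:ℝ≥0∞) ^ (j+1) * C) ^ (3:ℕ)
          = (2:ℝ≥0∞) ^ (-(j:ℝ) * q) * ((2:ℝ≥0∞) ^ ((3:ℝ)*((j:ℝ)+1)) * C^3) := by
            rw [e1, mul_pow, e2]
        _ = (2:ℝ≥0∞) ^ (-(j:ℝ) * q + (3:ℝ)*((j:ℝ)+1)) * C^3 := by
            rw [← mul_assoc, ← ENNReal.rpow_add _ _ (by norm_num) (by norm_num)]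
        _ = (2:ℝ≥0∞) ^ ((3:ℝ) + ((3:ℝ)-q)*(j:ℝ)) * C^3 := by
            rw [show -(j:ℝ) * q + (3:ℝ)*((j:ℝ)+1) = (3:ℝ) + ((3:ℝ)-q)*(j:ℝ) by ring]
        _ = ((2:ℝ≥0∞) ^ (3:ℝ) * (2:ℝ≥0∞) ^ (((3:ℝ)-q)*(j:ℝ))) * C^3 := by
            rw [ENNReal.rpow_add _ _ (by norm_num) (by norm_num)]
        _ = 8 * C ^ 3 * ((2:ℝ≥0∞) ^ ((3:ℝ) - q)) ^ j := by
            rw [e3, ← e4]; ring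
    calc ∫⁻ x in B j, (‖u₀ x‖₊ : ℝ≥0∞) ^ q
        ≤ ∫⁻ _x in B j, (((2:ℝ≥0∞)⁻¹ ^ j) ^ q) := hb
      _ = ((2:ℝ≥0∞)⁻¹ ^ j) ^ q * volume (B j) := setLIntegral_const _ _
      _ ≤ ((2:ℝ≥0∞)⁻¹ ^ j) ^ q * ((2:ℝ≥0∞) ^ (j+1) * C) ^ (3:ℕ) := by gcongr
      _ = 8 * C ^ 3 * ((2:ℝ≥0∞) ^ ((3:ℝ) - q)) ^ j := harith
  calc ∫⁻ x in {x : E3 | ‖u₀ x‖ ≤ 1}, (‖u₀ x‖₊ : ℝ≥0∞) ^ q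
      ≤ ∫⁻ x in Z ∪ ⋃ j : ℕ, B j, (‖u₀ x‖₊ : ℝ≥0∞) ^ q := lintegral_mono_set hcover
    _ ≤ (∫⁻ x in Z, (‖u₀ x‖₊ : ℝ≥0∞) ^ q)
        + ∫⁻ x in ⋃ j : ℕ, B j, (‖u₀ x‖₊ : ℝ≥0∞) ^ q := lintegral_union_le _ _ _
    _ = ∫⁻ x in ⋃ j : ℕ, B j, (‖u₀ x‖₊ : ℝ≥0∞) ^ q := by rw [hzero, zero_add]
    _ ≤ ∑' j : ℕ, ∫⁻ x in B j, (‖u₀ x‖₊ : ℝ≥0∞) ^ q := lintegral_iUnion_le _ _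
    _ ≤ ∑' j : ℕ, 8 * C ^ 3 * ((2:ℝ≥0∞) ^ ((3:ℝ) - q)) ^ j := ENNReal.tsum_le_tsum hterm
    _ = 8 * C ^ 3 * ∑' j : ℕ, ((2:ℝ≥0∞) ^ ((3:ℝ) - q)) ^ j := ENNReal.tsum_mul_left
    _ = 8 * C ^ 3 * (1 - (2:ℝ≥0∞) ^ ((3:ℝ) - q))⁻¹ := by rw [ENNReal.tsum_geometric]
    _ < ⊤ := by
        apply ENNReal.mul_lt_top
        · exact ENNReal.mul_lt_top (by norm_num) (ENNReal.pow_lt_top hfin)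
        · exact ENNReal.inv_lt_top.mpr (tsub_pos_iff_not_le.mpr (not_le.mpr hrne))

/-- The Hölder-inequality step: on a subset of a unit ball, the `L²` mass of `u₀` to the
power `q/2` is controlled by the local `L^q` mass. -/
lemma aux_holder (u₀ : E3 → E3) (hmeas : Measurable u₀) {q : ℝ} (hq : 3 < q)
    (S : Set E3) (hS : volume S ≤ volume (ball (0:E3) 1)) :
    (∫⁻ x in S, (‖u₀ x‖₊ : ℝ≥0∞) ^ 2) ^ (q/2)
      ≤ (volume (ball (0:E3) 1)) ^ (q/2 - 1) * ∫⁻ x in S, (‖u₀ x‖₊ : ℝ≥0∞) ^ q := by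
  set p := q/2 with hp
  have hp1 : 1 < p := by rw [hp]; linarith
  have hp0 : (0:ℝ) < p := by linarith
  set p' := Real.conjExponent p with hp'
  have hpq : p.HolderConjugate p' := Real.HolderConjugate.conjExponent hp1
  set f : E3 → ℝ≥0∞ := fun x => (‖u₀ x‖₊ : ℝ≥0∞) ^ (2:ℕ) with hf
  have hfm : AEMeasurable f (volume.restrict S) := ((hmeas.nnnorm.coe_nnreal_ennreal).pow_const 2).aemeasurable
  have hgm : AEMeasurable (fun _ : E3 => (1:ℝ≥0∞)) (volume.restrict S) := aemeasurable_const
  have hH := ENNReal.lintegral_mul_le_Lp_mul_Lq (volume.restrict S) hpq hfm hgm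
  have key3 : ∀ x : E3, f x ^ p = (‖u₀ x‖₊ : ℝ≥0∞) ^ q := by
    intro x
    show ((‖u₀ x‖₊ : ℝ≥0∞) ^ (2:ℕ)) ^ p = _
    rw [← ENNReal.rpow_natCast ((‖u₀ x‖₊ : ℝ≥0∞)) 2, ← ENNReal.rpow_mul]
    congr 1
    rw [hp]
    push_cast
    ring
  simp only [Pi.mul_apply, mul_one, ENNReal.one_rpow, lintegral_one,
    Measure.restrict_apply_univ, key3] at hH
  set I := ∫⁻ x in S, (‖u₀ x‖₊ : ℝ≥0∞) ^ q with hI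
  have h5 : (1/p') * p = p - 1 := by
    have h6 : p'⁻¹ = 1 - p⁻¹ := by
      have := hpq.inv_add_inv_eq_one
      linarith
    rw [one_div, h6, sub_mul, one_mul, inv_mul_cancel₀ (by positivity : p ≠ 0)]
  calc (∫⁻ x in S, (‖u₀ x‖₊ : ℝ≥0∞) ^ 2) ^ p
      ≤ (I ^ (1/p) * volume S ^ (1/p')) ^ p := ENNReal.rpow_le_rpow hH hp0.le
    _ = I ^ ((1/p) * p) * volume S ^ ((1/p') * p) := by
        rw [ENNReal.mul_rpow_of_nonneg _ _ hp0.le, ← ENNReal.rpow_mul, ← ENNReal.rpow_mul]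
    _ = I * volume S ^ (p - 1) := by
        rw [h5, show (1/p) * p = (1:ℝ) by field_simp, ENNReal.rpow_one]
    _ ≤ I * (volume (ball (0:E3) 1)) ^ (p - 1) :=
        mul_le_mul_right (ENNReal.rpow_le_rpow hS (by linarith)) I
    _ = (volume (ball (0:E3) 1)) ^ (p - 1) * I := mul_comm _ _

/-- Lemma B.1: if `u₀ ∈ L^{3,∞}(ℝ³)`, then `u₀ ∈ E²_q` for every
`q > 3`, i.e. `∑_k (∫_{B₁(k)} |u₀|²)^{q/2} < ∞`. -/
theorem weakL3_mem_E2q (u₀ : E3 → E3) (hmeas : Measurable u₀) (hfin : wL3 u₀ < ⊤) :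
    ∀ q : ℝ, 3 < q →
      ∑' k : Fin 3 → ℤ, (∫⁻ x in ball (zc k) 1, (‖u₀ x‖₊ : ℝ≥0∞) ^ 2) ^ (q/2) < ⊤ := by
  intro q hq
  have hq0 : (0:ℝ) < q/2 := by linarith
  have hq1 : (1:ℝ) ≤ q/2 := by linarith
  set SS := {x : E3 | ‖u₀ x‖ ≤ 1} with hSS
  set TT := {x : E3 | 1 < ‖u₀ x‖} with hTT
  have hSSm : MeasurableSet SS := measurableSet_le hmeas.norm measurable_const
  have hTTm : MeasurableSet TT := measurableSet_lt measurable_const hmeas.norm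
  set g : E3 → ℝ≥0∞ := fun x => (‖u₀ x‖₊ : ℝ≥0∞) ^ (2:ℕ) with hg
  have hgm : Measurable g := (hmeas.nnnorm.coe_nnreal_ennreal).pow_const 2
  set gq : E3 → ℝ≥0∞ := fun x => (‖u₀ x‖₊ : ℝ≥0∞) ^ q with hgq
  have hgqm : Measurable gq := (hmeas.nnnorm.coe_nnreal_ennreal).pow_const q
  set T := ∫⁻ x in TT, g x with hT
  set P := ∫⁻ x in SS, gq x with hP
  have hTfin : T < ⊤ := aux_tail u₀ hmeas hfin
  have hPfin : P < ⊤ := aux_small u₀ hmeas hfin hq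
  set V0 := volume (ball (0:E3) 1) with hV0
  have hV0fin : V0 ≠ ⊤ := measure_ball_lt_top.ne
  set b : (Fin 3 → ℤ) → ℝ≥0∞ := fun k => ∫⁻ x in ball (zc k) 1 ∩ SS, g x with hb
  set c : (Fin 3 → ℤ) → ℝ≥0∞ := fun k => ∫⁻ x in ball (zc k) 1 ∩ TT, g x with hc
  set d : (Fin 3 → ℤ) → ℝ≥0∞ := fun k => ∫⁻ x in ball (zc k) 1 ∩ SS, gq x with hd
  have hind : ∀ (W : Set E3), MeasurableSet W → ∀ (h : E3 → ℝ≥0∞) (k : Fin 3 → ℤ),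
      ∫⁻ x in ball (zc k) 1, W.indicator h x = ∫⁻ x in ball (zc k) 1 ∩ W, h x := by
    intro W hW h k
    rw [lintegral_indicator hW, Measure.restrict_restrict hW, Set.inter_comm]
  have hsumc : ∑' k, c k ≤ 8 * T := by
    have h1 := aux_overlap (TT.indicator g) (hgm.indicator hTTm)
    rw [lintegral_indicator hTTm] at h1
    calc ∑' k, c k = ∑' k, ∫⁻ x in ball (zc k) 1, TT.indicator g x :=
          tsum_congr fun k => (hind TT hTTm g k).symm
      _ ≤ 8 * T := h1
  have hsumd : ∑' k, d k ≤ 8 * P := by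
    have h1 := aux_overlap (SS.indicator gq) (hgqm.indicator hSSm)
    rw [lintegral_indicator hSSm] at h1
    calc ∑' k, d k = ∑' k, ∫⁻ x in ball (zc k) 1, SS.indicator gq x :=
          tsum_congr fun k => (hind SS hSSm gq k).symm
      _ ≤ 8 * P := h1
  have hck : ∀ k, c k ≤ T := fun k => lintegral_mono_set inter_subset_right
  have hkey : ∀ k, (∫⁻ x in ball (zc k) 1, g x) ^ (q/2)
      ≤ 2^(q/2) * (V0 ^ (q/2 - 1) * d k + T ^ (q/2 - 1) * c k) := by
    intro k
    have hsplit : (∫⁻ x in ball (zc k) 1, g x) ≤ b k + c k := by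
      have hsub : ball (zc k) 1 ⊆ (ball (zc k) 1 ∩ SS) ∪ (ball (zc k) 1 ∩ TT) := by
        intro x hx
        by_cases h : ‖u₀ x‖ ≤ 1
        · exact Or.inl ⟨hx, h⟩
        · exact Or.inr ⟨hx, lt_of_not_ge h⟩
      exact (lintegral_mono_set hsub).trans (lintegral_union_le _ _ _)
    have hbk : b k ^ (q/2) ≤ V0 ^ (q/2 - 1) * d k := by
      apply aux_holder u₀ hmeas hq
      calc volume (ball (zc k) 1 ∩ SS) ≤ volume (ball (zc k) 1) :=
            measure_mono inter_subset_left
        _ = volume (ball (0:E3) 1) := Measure.addHaar_ball_center volume (zc k) 1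
    have hck' : c k ^ (q/2) ≤ T ^ (q/2 - 1) * c k :=
      aux_rpow_le_mul (hck k) hTfin.ne hq1
    calc (∫⁻ x in ball (zc k) 1, g x) ^ (q/2)
        ≤ (b k + c k) ^ (q/2) := ENNReal.rpow_le_rpow hsplit hq0.le
      _ ≤ 2^(q/2) * (b k ^ (q/2) + c k ^ (q/2)) := aux_add_rpow_le _ _ hq0.le
      _ ≤ 2^(q/2) * (V0 ^ (q/2 - 1) * d k + T ^ (q/2 - 1) * c k) := by gcongr
  calc ∑' k : Fin 3 → ℤ, (∫⁻ x in ball (zc k) 1, g x) ^ (q/2)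
      ≤ ∑' k : Fin 3 → ℤ, 2^(q/2) * (V0 ^ (q/2 - 1) * d k + T ^ (q/2 - 1) * c k) :=
        ENNReal.tsum_le_tsum hkey
    _ = 2^(q/2) * (V0 ^ (q/2 - 1) * ∑' k, d k + T ^ (q/2 - 1) * ∑' k, c k) := by
        rw [ENNReal.tsum_mul_left]
        congr 1
        rw [ENNReal.tsum_add, ENNReal.tsum_mul_left, ENNReal.tsum_mul_left]
    _ ≤ 2^(q/2) * (V0 ^ (q/2 - 1) * (8 * P) + T ^ (q/2 - 1) * (8 * T)) := by gcongr
    _ < ⊤ := by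
        apply ENNReal.mul_lt_top
        · exact ENNReal.rpow_lt_top_of_nonneg hq0.le (by norm_num)
        · apply ENNReal.add_lt_top.mpr
          constructor
          · exact ENNReal.mul_lt_top
              (ENNReal.rpow_lt_top_of_nonneg (by linarith) hV0fin)
              (ENNReal.mul_lt_top (by norm_num) hPfin)
          · exact ENNReal.mul_lt_top
              (ENNReal.rpow_lt_top_of_nonneg (by linarith) hTfin.ne)
              (ENNReal.mul_lt_top (by norm_num) hTfin)

end
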